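/- The relation ≼ on Mockingbird terms is antisymmetric: if t ≼ t' and t' ≼ t then t = t'. Hence ≼ is a partial order on Mockingbird terms. -/

import Mathlib

/-- Mockingbird terms: the constant `M`, variables `x i`, and applications. -/
inductive MTerm : Type
  | M : MTerm
  | var : ℕ → MTerm
  | app : MTerm → MTerm → MTerm
  deriving DecidableEq

/-- The one-step rewrite relation `⇒` on Mockingbird terms. -/
inductive Step : MTerm → MTerm → Prop
  | mock (t : MTerm) : Step (MTerm.app MTerm.M t) (MTerm.app t t)
  | left {t1 t1' : MTerm} (t2 : MTerm) :
      Step t1 t1' → Step (MTerm.app t1 t2) (MTerm.app t1' t2)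
  | right (t1 : MTerm) {t2 t2' : MTerm} :
      Step t2 t2' → Step (MTerm.app t1 t2) (MTerm.app t1 t2')

/-- `≼`, the reflexive-transitive closure of `⇒`. -/
def MLe : MTerm → MTerm → Prop := Relation.ReflTransGen Step

/-- `≡`, the reflexive-symmetric-transitive closure of `⇒`. -/
def MEquiv : MTerm → MTerm → Prop := Relation.EqvGen Step

/-- Strict version of `≼`. -/
def MLt (s t : MTerm) : Prop := MLe s t ∧ s ≠ t

/-- Covering relation for `≼`. -/
def MCovBy (s t : MTerm) : Prop := MLt s t ∧ ∀ z, MLt s z → ¬ MLt z t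

/-- Duplicative trees: white or black nodes with a list (forest) of children. -/
inductive DTree : Type
  | W : List DTree → DTree
  | B : List DTree → DTree

/-- The one-step relation `⋖` on duplicative forests. -/
inductive DStep : List DTree → List DTree → Prop
  | dup (g : List DTree) : DStep [DTree.W g] [DTree.B (g ++ g)]
  | white {g g' : List DTree} : DStep g g' → DStep [DTree.W g] [DTree.W g']
  | black {g g' : List DTree} : DStep g g' → DStep [DTree.B g] [DTree.B g']
  | head {t t' : DTree} (f : List DTree) : DStep [t] [t'] → DStep (t :: f) (t' :: f)
  | tail (t : DTree) {f f' : List DTree} : DStep f f' → DStep (t :: f) (t :: f')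

/-- `≪`, the reflexive-transitive closure of `⋖`. -/
def DLe : List DTree → List DTree → Prop := Relation.ReflTransGen DStep

/-- The map `fr` from Mockingbird terms to duplicative forests. -/
def fr : MTerm → List DTree
  | MTerm.M => []
  | MTerm.var _ => []
  | MTerm.app MTerm.M MTerm.M => [DTree.B []]
  | MTerm.app MTerm.M t' => [DTree.W (fr t')]
  | MTerm.app t t' => [DTree.B (fr t ++ fr t')]

mutual
  /-- The pruning map on duplicative trees (returns a forest). -/
  def prT : DTree → List DTree
    | DTree.W g => [DTree.W (prF g)]
    | DTree.B g => prF g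
  /-- The pruning map on duplicative forests. -/
  def prF : List DTree → List DTree
    | [] => []
    | t :: f => prT t ++ prF f
end

mutual
  /-- The statistic `mtStat` on duplicative trees. -/
  def mtStat : DTree → ℕ
    | DTree.W g => 2 * ml g
    | DTree.B g => ml g
  /-- Sum of `mtStat` over the trees of a forest. -/
  def mtsum : List DTree → ℕ
    | [] => 0
    | t :: f => mtStat t + mtsum f
  /-- The statistic `ml` on duplicative forests: `1 - ℓ + Σ mtStat`. -/
  def ml : List DTree → ℕ
    | f => mtsum f + 1 - f.length
end

mutual
  /-- Number of white nodes in a duplicative tree. -/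
  def whitesT : DTree → ℕ
    | DTree.W g => 1 + whitesF g
    | DTree.B g => whitesF g
  /-- Number of white nodes in a duplicative forest. -/
  def whitesF : List DTree → ℕ
    | [] => 0
    | t :: f => whitesT t + whitesF f
end

/-- Closed terms: no variables. -/
def MClosed : MTerm → Prop
  | MTerm.M => True
  | MTerm.var _ => False
  | MTerm.app a b => MClosed a ∧ MClosed b

/-- Degree: number of applications. -/
def deg : MTerm → ℕ
  | MTerm.M => 0
  | MTerm.var _ => 0
  | MTerm.app a b => deg a + deg b + 1

/-- Subterm relation. -/
inductive Subterm : MTerm → MTerm → Prop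
  | refl (t : MTerm) : Subterm t t
  | left {s a : MTerm} (b : MTerm) : Subterm s a → Subterm s (MTerm.app a b)
  | right (a : MTerm) {s b : MTerm} : Subterm s b → Subterm s (MTerm.app a b)

/-- The term `r_d`. -/
def rTerm : ℕ → MTerm
  | 0 => MTerm.M
  | d + 1 => MTerm.app MTerm.M (rTerm d)

/-- Saturated chain from `a` to `b`, given as the list of its elements. -/
def SatChain (a b : MTerm) (c : List MTerm) : Prop :=
  List.Chain' MCovBy c ∧ c.head? = some a ∧ c.getLast? = some b

/-! Weigh a term multiplicatively, with `M` weighing 2 and every variable 3. Each contraction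
`M ⋆ t ⇒ t ⋆ t` multiplies the weight of the redex by `w(t) / 2`, and `w(t) > 2` unless `t = M`, so
every step other than the loop `M ⋆ M ⇒ M ⋆ M` strictly increases the weight. -/

namespace MTerm

def weight : MTerm → ℕ
  | M => 2
  | var _ => 3
  | app a b => a.weight * b.weight

lemma two_le_weight (t : MTerm) : 2 ≤ t.weight := by
  induction t with
  | M => exact le_rfl
  | var _ => norm_num [weight]
  | app a b iha ihb => exact le_trans (by norm_num) (Nat.mul_le_mul iha ihb)

lemma eq_M_or_two_lt_weight (t : MTerm) : t = M ∨ 2 < t.weight := by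
  cases t with
  | M => exact Or.inl rfl
  | var _ => exact Or.inr (by norm_num [weight])
  | app a b =>
    exact Or.inr (lt_of_lt_of_le (by norm_num) (Nat.mul_le_mul a.two_le_weight b.two_le_weight))

end MTerm

lemma Step.eq_or_weight_lt {t u : MTerm} (h : Step t u) : t = u ∨ t.weight < u.weight := by
  induction h with
  | mock t =>
    rcases t.eq_M_or_two_lt_weight with rfl | ht
    · exact Or.inl rfl
    · exact Or.inr (Nat.mul_lt_mul_of_pos_right ht (by omega))
  | left t2 _ ih =>
    rcases ih with rfl | hlt
    · exact Or.inl rfl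
    · exact Or.inr (Nat.mul_lt_mul_of_pos_right hlt (by have := t2.two_le_weight; omega))
  | right t1 _ ih =>
    rcases ih with rfl | hlt
    · exact Or.inl rfl
    · exact Or.inr (Nat.mul_lt_mul_of_pos_left hlt (by have := t1.two_le_weight; omega))

lemma MLe.eq_or_weight_lt {t u : MTerm} (h : MLe t u) : t = u ∨ t.weight < u.weight := by
  induction h with
  | refl => exact Or.inl rfl
  | tail _ hstep ih =>
    rcases hstep.eq_or_weight_lt with rfl | hlt'
    · exact ih
    rcases ih with rfl | hlt
    · exact Or.inr hlt'
    · exact Or.inr (hlt.trans hlt')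

/-- the relation `≼` on Mockingbird terms is antisymmetric. -/
theorem mockingbird_le_antisymm :
    ∀ t t' : MTerm, MLe t t' → MLe t' t → t = t' := by
  intro t t' h h'
  rcases h.eq_or_weight_lt with heq | hlt
  · exact heq
  rcases h'.eq_or_weight_lt with heq | hlt'
  · exact heq.symm
  exact absurd (hlt.trans hlt') (lt_irrefl _)
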